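/- arXiv:1103.2872 — 2 statements merged into one kernel-verified Lean document; each statement's English description precedes it below -/
import Mathlib

section
/- Suppose F satisfies the quantile convergence condition lim_{t↓0} (F⁻(1−tx) − F⁻(1−t))/ã(t) = (x^{−γ}−1)/γ locally uniformly for x > 0 (with γ > −1/2). Then there always exists an intermediate sequence (k_n) (k_n → ∞, k_n/n → 0) such that for some ε̃ > 0 one has k_n^{1/2} · sup_{0<x≤1+ε̃} x^{γ+1/2} |R(k_n/n, x)| → 0; i.e., this growth condition restricts only the speed at which k_n grows, and is not an additional condition on F. -/
open MeasureTheory ProbabilityTheory Filter Topology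
open scoped ENNReal NNReal Classical

noncomputable section

namespace ExtremeRisk

/-- `F` is a cumulative distribution function on `ℝ`. -/
structure IsCDF (F : ℝ → ℝ) : Prop where
  mono : Monotone F
  rightCont : ∀ x, ContinuousWithinAt F (Set.Ici x) x
  tendsto_bot : Tendsto F atBot (nhds 0)
  tendsto_top : Tendsto F atTop (nhds 1)

/-- generalized inverse (quantile function) of a cdf -/
def qf (F : ℝ → ℝ) (p : ℝ) : ℝ := sInf {x | p ≤ F x}

/-- the filter describing `u ↑ F⁻(1)` (approach to the right endpoint of F from below) -/
def upperTail (F : ℝ → ℝ) : Filter ℝ :=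
  if BddAbove {x | F x < 1} then
    nhdsWithin (sSup {x | F x < 1}) (Set.Iio (sSup {x | F x < 1}))
  else atTop

/-- `z_γ(x) = (x^(−γ)−1)/γ`, interpreted as `−log x` for `γ = 0`. -/
def zfun (γ x : ℝ) : ℝ := if γ = 0 then -Real.log x else (x ^ (-γ) - 1) / γ

/-- cdf of the generalized Pareto distribution with shape `γ` and scale `σ`. -/
def gpdCDF (γ σ x : ℝ) : ℝ :=
  if x ≤ 0 then 0
  else if γ = 0 then 1 - Real.exp (-(x / σ))
  else if 0 < 1 + γ * x / σ then 1 - (1 + γ * x / σ) ^ (-(1 / γ))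
  else 1

/-- a cdf is non-degenerate if it takes a value in (0,1) -/
def NondegCDF (H : ℝ → ℝ) : Prop := ∃ x, H x ∈ Set.Ioo (0 : ℝ) 1

/-- remainder in the quantile convergence condition -/
def Rrem (F : ℝ → ℝ) (atil : ℝ → ℝ) (γ t x : ℝ) : ℝ :=
  (qf F (1 - t * x) - qf F (1 - t)) / atil t - zfun γ x

/-- `(k_n)` is an intermediate sequence -/
def Intermediate (k : ℕ → ℕ) : Prop :=
  Tendsto (fun n => (k n : ℝ)) atTop atTop ∧ Tendsto (fun n => (k n : ℝ) / n) atTop (nhds 0)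

/-- the weighted sup norm of `D_{γ,ε}` (over `(0,1]`) -/
def normD (γ ε : ℝ) (z : ℝ → ℝ) : ℝ :=
  ⨆ t : Set.Ioc (0 : ℝ) 1, (t : ℝ) ^ (γ + 1 / 2 + ε) * |z t|

/-- sup norm over (0,1) -/
def normSup01 (z : ℝ → ℝ) : ℝ := ⨆ t : Set.Ioo (0 : ℝ) 1, |z t|

/-- membership in `D_{γ,ε}`: right-continuous with left limits on `(0,1]`, finite weighted norm -/
def MemD (γ ε : ℝ) (z : ℝ → ℝ) : Prop :=
  (∀ t ∈ Set.Ioo (0 : ℝ) 1, ContinuousWithinAt z (Set.Ici t) t) ∧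
  (∀ t ∈ Set.Ioc (0 : ℝ) 1, ∃ L, Tendsto z (nhdsWithin t (Set.Ioo 0 t)) (nhds L)) ∧
  BddAbove (Set.range fun t : Set.Ioc (0 : ℝ) 1 => (t : ℝ) ^ (γ + 1 / 2 + ε) * |z t|)

/-- boundedness on (0,1) -/
def Bdd01 (z : ℝ → ℝ) : Prop := BddAbove (Set.range fun t : Set.Ioo (0 : ℝ) 1 => |z t|)

/-- Weak convergence of function-valued random elements with respect to a (semi)norm `N`
on a function space with membership predicate `M`:  expectations of all bounded,
`N`-sequentially-continuous functionals converge. -/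
def WeakConvProc {Ω Ω' : Type*} [MeasurableSpace Ω] [MeasurableSpace Ω']
    (M : (ℝ → ℝ) → Prop) (N : (ℝ → ℝ) → ℝ)
    (P : Measure Ω) (Z : ℕ → Ω → ℝ → ℝ) (P' : Measure Ω') (L : Ω' → ℝ → ℝ) : Prop :=
  ∀ f : (ℝ → ℝ) → ℝ, (∃ C, ∀ z, |f z| ≤ C) →
    (∀ (w : ℕ → ℝ → ℝ) (w₀ : ℝ → ℝ), (∀ n, M (w n)) → M w₀ →
      Tendsto (fun n => N (fun t => w n t - w₀ t)) atTop (nhds 0) →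
      Tendsto (fun n => f (w n)) atTop (nhds (f w₀))) →
    Tendsto (fun n => ∫ ω, f (Z n ω) ∂P) atTop (nhds (∫ ω, f (L ω) ∂P'))

/-- weak convergence of real random variables to the law of a limiting random variable -/
def WeakConvReal {Ω Ω' : Type*} [MeasurableSpace Ω] [MeasurableSpace Ω']
    (P : Measure Ω) (Z : ℕ → Ω → ℝ) (P' : Measure Ω') (L : Ω' → ℝ) : Prop :=
  ∀ f : BoundedContinuousFunction ℝ ℝ,
    Tendsto (fun n => ∫ ω, f (Z n ω) ∂P) atTop (nhds (∫ ω, f (L ω) ∂P'))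

/-- weak convergence to a centered normal distribution with variance `v`,
expressed through convergence of distribution functions. -/
def TendstoGaussianCDF {Ω : Type*} [MeasurableSpace Ω]
    (P : Measure Ω) (Z : ℕ → Ω → ℝ) (v : ℝ) : Prop :=
  ∀ x : ℝ, Tendsto (fun n => (P {ω | Z n ω ≤ x}).toReal) atTop
    (nhds ((gaussianReal 0 (Real.toNNReal v) (Set.Iic x)).toReal))

/-- the `i`-th smallest value (1-indexed) among `x 0, …, x (n-1)` -/
def orderStat {n : ℕ} (x : Fin n → ℝ) (i : ℕ) : ℝ :=
  ((List.ofFn x).insertionSort (· ≤ ·)).getD (i - 1) 0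

/-- the tail empirical quantile function `Q_n(t) = X_{n−[k_n t]:n}` -/
def tailQF {Ω : Type*} (n : ℕ) (X : ℕ → Ω → ℝ) (k : ℕ) (ω : Ω) (t : ℝ) : ℝ :=
  orderStat (fun i : Fin n => X i.1 ω) (n - ⌊(k : ℝ) * t⌋₊)

/-- `X 0, X 1, …` are i.i.d. with common cdf `F` under `P` -/
def IID {Ω : Type*} [MeasurableSpace Ω] (P : Measure Ω) (X : ℕ → Ω → ℝ) (F : ℝ → ℝ) : Prop :=
  (∀ i, Measurable (X i)) ∧ iIndepFun X P ∧
    ∀ i x, (P {ω | X i ω ≤ x}).toReal = F x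

/-- standard Brownian motion (on `[0,∞)`) -/
structure IsStdBrownian {Ω : Type*} [MeasurableSpace Ω] (P : Measure Ω) (W : ℝ → Ω → ℝ) : Prop where
  meas : ∀ t, Measurable (W t)
  init : ∀ᵐ ω ∂P, W 0 ω = 0
  cont : ∀ᵐ ω ∂P, ContinuousOn (fun t => W t ω) (Set.Ici 0)
  gauss_incr : ∀ s t : ℝ, 0 ≤ s → s ≤ t →
    P.map (fun ω => W t ω - W s ω) = gaussianReal 0 (Real.toNNReal (t - s))
  indep_incr : ∀ (m : ℕ) (u : ℕ → ℝ), (∀ i, 0 ≤ u i) → Monotone u →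
    iIndepFun
      (fun (i : Fin m) ω => W (u (i.1 + 1)) ω - W (u i.1) ω) P

/-- integral of `f` over the set `s` with respect to a signed measure, via the
Jordan decomposition -/
def sintegral (ν : SignedMeasure ℝ) (s : Set ℝ) (f : ℝ → ℝ) : ℝ :=
  (∫ x in s, f x ∂ν.toJordanDecomposition.posPart) -
    ∫ x in s, f x ∂ν.toJordanDecomposition.negPart

def ScaleShiftInvariant (T : (ℝ → ℝ) → ℝ) : Prop :=
  ∀ a b : ℝ, 0 < a → ∀ z : ℝ → ℝ, T (fun t => a * z t + b) = T z

def ScaleInvariant (T : (ℝ → ℝ) → ℝ) : Prop :=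
  ∀ a : ℝ, 0 < a → ∀ z : ℝ → ℝ, T (fun t => a * z t) = T z

def ScaleEquivShiftInvariant (S : (ℝ → ℝ) → ℝ) : Prop :=
  ∀ a b : ℝ, 0 < a → ∀ z : ℝ → ℝ, S (fun t => a * z t + b) = a * S z

/-- the Hadamard-type differentiability condition at `z_γ` with derivative the signed
measure `ν` on `(0,1]` -/
def HadamardDiffAt (γ ε : ℝ) (T : (ℝ → ℝ) → ℝ) (ν : SignedMeasure ℝ) : Prop :=
  ∀ (lam : ℕ → ℝ) (y : ℕ → ℝ → ℝ) (y₀ : ℝ → ℝ),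
    (∀ n, 0 < lam n) → Tendsto lam atTop (nhds 0) →
    (∀ n, MemD γ ε (y n)) → MemD γ ε y₀ →
    Tendsto (fun n => normD γ ε (fun t => y n t - y₀ t)) atTop (nhds 0) →
    Tendsto (fun n => (T (fun t => zfun γ t + lam n * y n t) - T (fun t => zfun γ t)) / lam n)
      atTop (nhds (sintegral ν (Set.Ioc 0 1) y₀))

/-- `σ_{T,γ}² = ∫∫ (st)^{−(γ+1)} min(s,t) ν(ds) ν(dt)` -/
def varT (γ : ℝ) (ν : SignedMeasure ℝ) : ℝ :=
  sintegral ν (Set.Ioc 0 1) fun s =>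
    sintegral ν (Set.Ioc 0 1) fun t => (s * t) ^ (-(γ + 1)) * min s t

/-- `max_{0 ≤ i < n} X i ω` (junk value for `n = 0`) -/
def sampleMax {Ω : Type*} (n : ℕ) (X : ℕ → Ω → ℝ) (ω : Ω) : ℝ :=
  ((List.range n).map fun i => X i ω).foldr max (X 0 ω)

/-- convergence of the normalized excess distribution to `H` at continuity points of `H` -/
def ExcessConv {Ω : Type*} [MeasurableSpace Ω] (P : Measure Ω) (X : Ω → ℝ)
    (F : ℝ → ℝ) (a : ℝ → ℝ) (H : ℝ → ℝ) : Prop :=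
  ∀ x : ℝ, ContinuousAt H x →
    Tendsto (fun u =>
        (P {ω | X ω - u ≤ a u * x ∧ u < X ω}).toReal / (P {ω | u < X ω}).toReal)
      (upperTail F) (nhds (H x))

/-- convergence of normalized sample maxima to `G` at continuity points of `G` -/
def MaxConv {Ω : Type*} [MeasurableSpace Ω] (P : Measure Ω) (X : ℕ → Ω → ℝ)
    (an bn : ℕ → ℝ) (G : ℝ → ℝ) : Prop :=
  ∀ x : ℝ, ContinuousAt G x →
    Tendsto (fun n => (P {ω | (sampleMax n X ω - bn n) / an n ≤ x}).toReal)
      atTop (nhds (G x))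

/-- `(1 + log G)^+`, with the convention that it vanishes where `G` vanishes -/
def plusLog (G : ℝ → ℝ) (x : ℝ) : ℝ := if G x = 0 then 0 else max (1 + Real.log (G x)) 0

/-!
Locally uniform convergence controls the remainder only on compact subsets of `(0, ∞)`; near
`x = 0` the weight `x ^ (γ + 1/2)` has to absorb it. Writing `g t x` for the normalized quantile
increment, `g t (c x) = g t c + (ã (c t) / ã t) * g (c t) x`, and `ã (c t) / ã t → c ^ (-γ)`
because `z_γ(c x) = z_γ(c) + c ^ (-γ) z_γ(x)`. Iterating transports the uniform bound on
`[c, 1]` to the shells `[c ^ (m+1), c ^ m]`, where the error grows at most like `(m+1)² M ^ m`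
for any `M > max 1 (c ^ (-γ))`. On those shells the weight is at most `(c ^ (γ + 1/2)) ^ m`,
and since `c ^ (-γ) c ^ (γ + 1/2) = √c < 1`, `M` can be taken so small that the weighted
remainder tends to `0` uniformly on `(0, 2]` as `t ↓ 0`. A diagonal choice of `k_n` then
makes `√k_n` times this supremum vanish while `k_n / n → 0`.
-/

open Set

theorem zfun_one (γ : ℝ) : zfun γ 1 = 0 := by
  unfold zfun; split_ifs <;> simp

theorem zfun_mul (γ : ℝ) {c x : ℝ} (hc : 0 < c) (hx : 0 < x) :
    zfun γ (c * x) = zfun γ c + c ^ (-γ) * zfun γ x := by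
  unfold zfun
  split_ifs with hγ
  · simp [hγ, Real.log_mul hc.ne' hx.ne']; ring
  · rw [Real.mul_rpow hc.le hx.le]
    field_simp
    ring

theorem zfun_strictAntiOn (γ : ℝ) : StrictAntiOn (zfun γ) (Ioi 0) := by
  intro x hx y _ hxy
  unfold zfun
  split_ifs with hγ
  · exact neg_lt_neg (Real.log_lt_log hx hxy)
  · rcases lt_or_gt_of_ne hγ with hneg | hpos
    · rw [div_lt_div_right_of_neg hneg, sub_lt_sub_iff_right]
      exact Real.rpow_lt_rpow hx.le hxy (neg_pos.2 hneg)
    · rw [div_lt_div_iff_of_pos_right hpos, sub_lt_sub_iff_right]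
      exact Real.rpow_lt_rpow_of_neg hx hxy (neg_neg_of_pos hpos)

theorem zfun_nonneg (γ : ℝ) {x : ℝ} (hx : 0 < x) (hx1 : x ≤ 1) : 0 ≤ zfun γ x :=
  zfun_one γ ▸ (zfun_strictAntiOn γ).antitoneOn hx (zero_lt_one' ℝ) hx1

theorem zfun_pos (γ : ℝ) {x : ℝ} (hx : 0 < x) (hx1 : x < 1) : 0 < zfun γ x :=
  zfun_one γ ▸ zfun_strictAntiOn γ hx (zero_lt_one' ℝ) hx1

theorem zfun_le_of_pow_succ_le (γ : ℝ) {c M x : ℝ} (hc0 : 0 < c) (hc1 : c ≤ 1)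
    (hM1 : 1 ≤ M) (hρM : c ^ (-γ) ≤ M) (m : ℕ) (hx : c ^ (m + 1) ≤ x) :
    zfun γ x ≤ zfun γ c * (m + 1) * M ^ m := by
  have hA : 0 ≤ zfun γ c := zfun_nonneg γ hc0 hc1
  have hpow (m : ℕ) : zfun γ (c ^ (m + 1)) ≤ zfun γ c * (m + 1) * M ^ m := by
    induction m with
    | zero => simp
    | succ m ih =>
      have h0 := zfun_nonneg γ (pow_pos hc0 (m + 1)) (pow_le_one₀ hc0.le hc1)
      have hMm : 1 ≤ M ^ m * M := pow_succ M m ▸ one_le_pow₀ hM1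
      rw [pow_succ', zfun_mul γ hc0 (pow_pos hc0 _)]
      calc zfun γ c + c ^ (-γ) * zfun γ (c ^ (m + 1))
          ≤ zfun γ c + M * (zfun γ c * (m + 1) * M ^ m) := by gcongr
        _ ≤ zfun γ c * ((m + 1 : ℕ) + 1) * M ^ (m + 1) := by
          push_cast; rw [pow_succ]; nlinarith [mul_le_mul_of_nonneg_left hMm hA]
  exact ((zfun_strictAntiOn γ).antitoneOn (pow_pos hc0 _) ((pow_pos hc0 _).trans_le hx)
    hx).trans (hpow m)

def quantileIncrement (Q a : ℝ → ℝ) (t x : ℝ) : ℝ := (Q (1 - t * x) - Q (1 - t)) / a t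

theorem quantileIncrement_mul (Q a : ℝ → ℝ) {t c : ℝ} (hc : a (c * t) ≠ 0) (x : ℝ) :
    quantileIncrement Q a t (c * x) =
      quantileIncrement Q a t c + a (c * t) / a t * quantileIncrement Q a (c * t) x := by
  unfold quantileIncrement
  rw [div_mul_div_comm, mul_comm (a (c * t)), mul_div_mul_right _ _ hc, ← add_div]
  ring_nf

theorem eventually_ne_zero_of_tendsto_quantileIncrement {Q a : ℝ → ℝ} {l : Filter ℝ}
    {x y : ℝ}
    (h : Tendsto (fun t => quantileIncrement Q a t x) l (𝓝 y)) (hy : y ≠ 0) :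
    ∀ᶠ t in l, a t ≠ 0 := by
  filter_upwards [h.eventually_ne hy] with t ht hat
  simp [quantileIncrement, hat] at ht

theorem tendsto_mul_nhdsGT_zero {c : ℝ} (hc : 0 < c) :
    Tendsto (fun t => c * t) (𝓝[>] 0) (𝓝[>] 0) := by
  simpa only [comap_mulLeft_nhdsGT_zero hc] using
    tendsto_comap (f := fun t => c * t) (x := 𝓝[>] 0)

theorem tendsto_div_of_tendsto_quantileIncrement {Q a : ℝ → ℝ} {γ c : ℝ} (hc : 0 < c)
    (h₁ : Tendsto (fun t => quantileIncrement Q a t c) (𝓝[>] 0) (𝓝 (zfun γ c)))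
    (h₂ : Tendsto (fun t => quantileIncrement Q a t (c * c)) (𝓝[>] 0) (𝓝 (zfun γ (c * c))))
    (hz : zfun γ c ≠ 0) :
    Tendsto (fun t => a (c * t) / a t) (𝓝[>] 0) (𝓝 (c ^ (-γ))) := by
  have h₁c := h₁.comp (tendsto_mul_nhdsGT_zero hc)
  have hlim := (h₂.sub h₁).div h₁c hz
  rw [zfun_mul γ hc hc, add_sub_cancel_left, mul_div_assoc, div_self hz, mul_one] at hlim
  refine hlim.congr' ?_
  have hac := eventually_ne_zero_of_tendsto_quantileIncrement h₁ hz
  filter_upwards [h₁c.eventually_ne hz, (tendsto_mul_nhdsGT_zero hc).eventually hac]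
    with t ht hat
  simp only [Function.comp_apply] at ht
  show (quantileIncrement Q a t (c * c) - quantileIncrement Q a t c) /
    quantileIncrement Q a (c * t) c = _
  rw [quantileIncrement_mul Q a hat, add_sub_cancel_left, mul_div_assoc, div_self ht, mul_one]

theorem exists_Ioo_forall_quantileIncrement_approx {Q a : ℝ → ℝ} {γ c η : ℝ}
    (hqc : TendstoLocallyUniformlyOn (quantileIncrement Q a) (zfun γ) (𝓝[>] 0) (Ioi 0))
    (hc0 : 0 < c) (hc1 : c < 1) (hη : 0 < η) :
    ∃ δ > 0, ∀ t ∈ Ioo 0 δ,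
      (∀ x ∈ Icc c 2, |quantileIncrement Q a t x - zfun γ x| ≤ η) ∧
      |a (c * t) / a t - c ^ (-γ)| ≤ η ∧ a (c * t) ≠ 0 := by
  have hU : TendstoUniformlyOn (quantileIncrement Q a) (zfun γ) (𝓝[>] 0) (Icc c 2) :=
    (tendstoLocallyUniformlyOn_iff_forall_isCompact isOpen_Ioi).1 hqc _
      (fun x hx => hc0.trans_le hx.1) isCompact_Icc
  have hzc : zfun γ c ≠ 0 := (zfun_pos γ hc0 hc1).ne'
  have hlimc := hU.tendsto_at ⟨le_rfl, by linarith⟩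
  have hratio := tendsto_div_of_tendsto_quantileIncrement hc0 hlimc
    (hqc.tendsto_at (mul_pos hc0 hc0)) hzc
  have hev : ∀ᶠ t in 𝓝[>] 0,
      (∀ x ∈ Icc c 2, |quantileIncrement Q a t x - zfun γ x| ≤ η) ∧
      |a (c * t) / a t - c ^ (-γ)| ≤ η ∧ a (c * t) ≠ 0 := by
    refine ((Metric.tendstoUniformlyOn_iff.1 hU η hη).mono fun t ht x hx => ?_).and
      (((Metric.tendsto_nhds.1 hratio η hη).mono fun t ht => ht.le).and
        ((tendsto_mul_nhdsGT_zero hc0).eventually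
          (eventually_ne_zero_of_tendsto_quantileIncrement hlimc hzc)))
    rw [abs_sub_comm]
    exact (ht x hx).le
  obtain ⟨δ, hδ, hsub⟩ := mem_nhdsGT_iff_exists_Ioo_subset.1 hev
  exact ⟨δ, hδ, fun t ht => hsub ht⟩

theorem abs_sub_zfun_le_of_mem_Icc_pow {g : ℝ → ℝ → ℝ} {φ : ℝ → ℝ}
    {γ c δ η M : ℝ}
    (hc0 : 0 < c) (hc1 : c < 1) (hη : 0 ≤ η) (hM1 : 1 ≤ M) (hM : c ^ (-γ) + η ≤ M)
    (hscale : ∀ t ∈ Ioo 0 δ, ∀ x, 0 < x → g t (c * x) = g t c + φ t * g (c * t) x)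
    (hφ : ∀ t ∈ Ioo 0 δ, |φ t - c ^ (-γ)| ≤ η)
    (hbase : ∀ t ∈ Ioo 0 δ, ∀ x ∈ Icc c 1, |g t x - zfun γ x| ≤ η) (m : ℕ) :
    ∀ t ∈ Ioo 0 δ, ∀ x ∈ Icc (c ^ (m + 1)) (c ^ m),
      |g t x - zfun γ x| ≤ η * (1 + zfun γ c) * (m + 1) ^ 2 * M ^ m := by
  have hA : 0 ≤ zfun γ c := zfun_nonneg γ hc0 hc1.le
  induction m with
  | zero =>
    intro t ht x hx
    have hx' : x ∈ Icc c 1 := by simpa using hx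
    simpa using (hbase t ht x hx').trans (le_mul_of_one_le_right hη (by linarith))
  | succ m ih =>
    intro t ht x hx
    set y := x / c
    have hxy : x = c * y := (mul_div_cancel₀ x hc0.ne').symm
    have hy : y ∈ Icc (c ^ (m + 1)) (c ^ m) := by
      rw [hxy] at hx
      exact ⟨le_of_mul_le_mul_left (by rw [← pow_succ']; exact hx.1) hc0,
        le_of_mul_le_mul_left (by rw [← pow_succ']; exact hx.2) hc0⟩
    have hy0 : 0 < y := (pow_pos hc0 _).trans_le hy.1
    have hct : c * t ∈ Ioo 0 δ :=
      ⟨mul_pos hc0 ht.1, (mul_lt_of_lt_one_left ht.1 hc1).trans ht.2⟩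
    have hsplit : g t x - zfun γ x = (g t c - zfun γ c) + φ t * (g (c * t) y - zfun γ y)
        + (φ t - c ^ (-γ)) * zfun γ y := by
      rw [hxy, hscale t ht y hy0, zfun_mul γ hc0 hy0]; ring
    have hφM : |φ t| ≤ M := by
      have := abs_sub_abs_le_abs_sub (φ t) (c ^ (-γ))
      rw [abs_of_pos (Real.rpow_pos_of_pos hc0 _)] at this
      linarith [hφ t ht]
    have hzy : |zfun γ y| ≤ zfun γ c * (m + 1) * M ^ m := by
      rw [abs_of_nonneg (zfun_nonneg γ hy0 (hy.2.trans (pow_le_one₀ hc0.le hc1.le)))]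
      exact zfun_le_of_pow_succ_le γ hc0 hc1.le hM1 (by linarith) m hy.1
    have hMm : 1 ≤ M ^ m := one_le_pow₀ hM1
    calc |g t x - zfun γ x|
        ≤ |g t c - zfun γ c| + |φ t| * |g (c * t) y - zfun γ y|
          + |φ t - c ^ (-γ)| * |zfun γ y| := by
          rw [hsplit, ← abs_mul, ← abs_mul]; exact abs_add_three _ _ _
      _ ≤ η + M * (η * (1 + zfun γ c) * (m + 1) ^ 2 * M ^ m)
          + η * (zfun γ c * (m + 1) * M ^ m) := by
          gcongr
          · exact hbase t ht c ⟨le_rfl, hc1.le⟩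
          · exact ih (c * t) hct y hy
          · exact hφ t ht
      _ ≤ η * (1 + zfun γ c) * ((m + 1 : ℕ) + 1) ^ 2 * M ^ (m + 1) := by
          have hQ : 1 ≤ M ^ m * M := one_le_mul_of_one_le_of_one_le hMm hM1
          have hPQ : M ^ m ≤ M ^ m * M := le_mul_of_one_le_right (by positivity) hM1
          have hηA : 0 ≤ η * zfun γ c * (m + 1) := by positivity
          push_cast
          rw [pow_succ M m]
          nlinarith [mul_le_mul_of_nonneg_left hQ hη, mul_le_mul_of_nonneg_left hPQ hηA,
            mul_nonneg (mul_nonneg hη hA)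
              (by positivity : (0 : ℝ) ≤ (2 * m + 2) * (M ^ m * M))]

theorem rpow_mul_abs_le_of_forall_mem_Icc_pow {h : ℝ → ℝ} {u : ℕ → ℝ} {c p K x : ℝ}
    (hc0 : 0 < c) (hc1 : c < 1) (hp : 0 ≤ p)
    (hh : ∀ m : ℕ, ∀ x ∈ Icc (c ^ (m + 1)) (c ^ m), |h x| ≤ u m)
    (hK : ∀ m : ℕ, (c ^ p) ^ m * u m ≤ K) (hx : x ∈ Ioc 0 1) : x ^ p * |h x| ≤ K := by
  obtain ⟨m, hm₁, hm₂⟩ := exists_nat_pow_near_of_lt_one hx.1 hx.2 hc0 hc1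
  calc x ^ p * |h x| ≤ (c ^ m) ^ p * u m := by
        gcongr
        · exact hx.1.le
        · exact hh m x ⟨hm₁.le, hm₂⟩
    _ = (c ^ p) ^ m * u m := by rw [Real.rpow_pow_comm hc0.le]
    _ ≤ K := hK m

theorem exists_bound_sq_mul_pow {θ : ℝ} (hθ : |θ| < 1) :
    ∃ K, ∀ m : ℕ, ((m : ℝ) + 1) ^ 2 * θ ^ m ≤ K := by
  have h := ((tendsto_pow_const_mul_const_pow_of_abs_lt_one 2 hθ).add
    ((tendsto_pow_const_mul_const_pow_of_abs_lt_one 1 hθ).const_mul 2)).add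
    (tendsto_pow_const_mul_const_pow_of_abs_lt_one 0 hθ)
  obtain ⟨K, hK⟩ := h.bddAbove_range
  exact ⟨K, fun m => (le_of_eq (by ring)).trans (hK ⟨m, rfl⟩)⟩

theorem eventually_rpow_mul_abs_quantileIncrement_sub_le {Q a : ℝ → ℝ} {γ : ℝ}
    (hγ : -(1 / 2 : ℝ) < γ)
    (hqc : TendstoLocallyUniformlyOn (quantileIncrement Q a) (zfun γ) (𝓝[>] 0) (Ioi 0))
    {ε : ℝ} (hε : 0 < ε) :
    ∀ᶠ t in 𝓝[>] 0, ∀ x ∈ Ioc (0 : ℝ) 2,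
      x ^ (γ + 1 / 2) * |quantileIncrement Q a t x - zfun γ x| ≤ ε := by
  set c : ℝ := 2⁻¹
  have hc0 : 0 < c := by norm_num
  have hc1 : c < 1 := by norm_num
  have hp : 0 < γ + 1 / 2 := by linarith
  set p := γ + 1 / 2 with hp_def
  have hs : 0 < c ^ p := Real.rpow_pos_of_pos hc0 p
  obtain ⟨M, hM, hMs⟩ : ∃ M, max 1 (c ^ (-γ)) < M ∧ M < 1 / c ^ p := by
    refine exists_between (max_lt ?_ ?_) <;> rw [lt_div_iff₀ hs]
    · simpa using Real.rpow_lt_one hc0.le hc1 hp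
    · rw [← Real.rpow_add hc0]
      exact Real.rpow_lt_one hc0.le hc1 (by rw [hp_def]; norm_num)
  have hθ : |M * c ^ p| < 1 := by
    rw [abs_of_pos (mul_pos (by linarith [le_max_left 1 (c ^ (-γ))]) hs)]
    exact (lt_div_iff₀ hs).1 hMs
  obtain ⟨K, hK⟩ := exists_bound_sq_mul_pow hθ
  have hK0 : 0 ≤ K := zero_le_one.trans (by simpa using hK 0)
  set A := zfun γ c
  have hA : 0 ≤ A := zfun_nonneg γ hc0 hc1.le
  set C := (1 + A) * K + 2 ^ p
  have hC : 0 < C := by positivity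
  obtain ⟨η, hη, hηM, hηC⟩ : ∃ η > 0, c ^ (-γ) + η ≤ M ∧ η * C ≤ ε :=
    ⟨min (M - c ^ (-γ)) (ε / C), lt_min (by linarith [le_max_right 1 (c ^ (-γ))])
      (div_pos hε hC), by linarith [min_le_left (M - c ^ (-γ)) (ε / C)],
      (le_div_iff₀ hC).1 (min_le_right _ _)⟩
  obtain ⟨δ, hδ, hgood⟩ := exists_Ioo_forall_quantileIncrement_approx hqc hc0 hc1 hη
  have hshell := abs_sub_zfun_le_of_mem_Icc_pow hc0 hc1 hη.le
    ((le_max_left _ _).trans hM.le) hηM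
    (fun t ht x _ => quantileIncrement_mul Q a (hgood t ht).2.2 x)
    (fun t ht => (hgood t ht).2.1)
    (fun t ht x hx => (hgood t ht).1 x ⟨hx.1, hx.2.trans one_le_two⟩)
  filter_upwards [Ioo_mem_nhdsGT hδ] with t ht x hx
  rcases le_or_gt x 1 with hx1 | hx1
  · calc x ^ p * |quantileIncrement Q a t x - zfun γ x| ≤ η * (1 + A) * K :=
          rpow_mul_abs_le_of_forall_mem_Icc_pow hc0 hc1 hp.le (fun m => hshell m t ht)
            (fun m => ?_) ⟨hx.1, hx1⟩
      _ ≤ η * C := by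
          rw [mul_assoc]
          gcongr
          exact le_add_of_nonneg_right (by positivity)
      _ ≤ ε := hηC
    calc (c ^ p) ^ m * (η * (1 + A) * (m + 1) ^ 2 * M ^ m)
        = η * (1 + A) * ((m + 1) ^ 2 * (M * c ^ p) ^ m) := by rw [mul_pow]; ring
      _ ≤ η * (1 + A) * K := by gcongr; exact hK m
  · calc x ^ p * |quantileIncrement Q a t x - zfun γ x| ≤ 2 ^ p * η :=
          mul_le_mul (Real.rpow_le_rpow hx.1.le hx.2 hp.le)
            ((hgood t ht).1 x ⟨hc1.le.trans hx1.le, hx.2⟩) (abs_nonneg _) (by positivity)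
      _ ≤ η * C := by
          rw [mul_comm]
          gcongr
          exact le_add_of_nonneg_left (by positivity)
      _ ≤ ε := hηC

theorem tendsto_iSup_rpow_mul_abs_quantileIncrement_sub {Q a : ℝ → ℝ} {γ : ℝ}
    (hγ : -(1 / 2 : ℝ) < γ)
    (hqc : TendstoLocallyUniformlyOn (quantileIncrement Q a) (zfun γ) (𝓝[>] 0) (Ioi 0)) :
    Tendsto (fun t => ⨆ x : Ioc (0 : ℝ) 2,
      (x : ℝ) ^ (γ + 1 / 2) * |quantileIncrement Q a t x - zfun γ x|) (𝓝[>] 0) (𝓝 0) := by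
  refine Metric.tendsto_nhds.2 fun ε hε => ?_
  filter_upwards [eventually_rpow_mul_abs_quantileIncrement_sub_le hγ hqc (half_pos hε)]
    with t ht
  have hsup := Real.iSup_le (fun x : Ioc (0 : ℝ) 2 => ht x x.2) (half_pos hε).le
  have hnonneg := Real.iSup_nonneg fun x : Ioc (0 : ℝ) 2 =>
    mul_nonneg (Real.rpow_nonneg x.2.1.le (γ + 1 / 2))
      (abs_nonneg (quantileIncrement Q a t x - zfun γ x))
  rw [Real.dist_0_eq_abs, abs_of_nonneg hnonneg]
  linarith

theorem exists_tendsto_atTop_tendsto_diag {X : Type*} [PseudoMetricSpace X]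
    {v : ℕ → ℕ → X} {x₀ : X} (hv : ∀ m, Tendsto (v m) atTop (𝓝 x₀)) :
    ∃ k : ℕ → ℕ, Tendsto k atTop atTop ∧
      Tendsto (fun n => v (k n) n) atTop (𝓝 x₀) := by
  have hev (m : ℕ) : ∀ᶠ n in atTop, m ≤ n ∧ dist (v m n) x₀ < 1 / (m + 1) :=
    (eventually_ge_atTop m).and (Metric.tendsto_nhds.1 (hv m) _ Nat.one_div_pos_of_nat)
  choose N hN using fun m => eventually_atTop.1 (hev m)
  set k : ℕ → ℕ := fun n => Nat.findGreatest (fun m => N m ≤ n) n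
  have hk {m n : ℕ} (h : N m ≤ n) : m ≤ k n ∧ N (k n) ≤ n :=
    ⟨Nat.le_findGreatest (hN m n h).1 h,
      Nat.findGreatest_spec (P := fun m => N m ≤ n) (hN m n h).1 h⟩
  refine ⟨k, tendsto_atTop.2 fun m => eventually_atTop.2 ⟨N m, fun n h => (hk h).1⟩,
    Metric.tendsto_atTop.2 fun ε hε => ?_⟩
  obtain ⟨m, hm⟩ := exists_nat_one_div_lt hε
  refine ⟨N m, fun n h => (hN (k n) n (hk h).2).2.trans_le ?_ |>.trans hm⟩
  gcongr
  exact (hk h).1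

theorem exists_intermediate_sqrt_mul_tendsto_zero {S : ℝ → ℝ}
    (hS : Tendsto S (𝓝[>] 0) (𝓝 0)) :
    ∃ k : ℕ → ℕ, Intermediate k ∧
      Tendsto (fun n => Real.sqrt (k n) * S ((k n : ℝ) / n)) atTop (𝓝 0) := by
  have hv (m : ℕ) : Tendsto (fun n : ℕ => ((m : ℝ) / n, Real.sqrt m * S ((m : ℝ) / n)))
      atTop (𝓝 (0, 0)) := by
    have hdiv : Tendsto (fun n : ℕ => (m : ℝ) / n) atTop (𝓝 0) :=
      tendsto_const_div_atTop_nhds_zero_nat _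
    refine hdiv.prodMk_nhds ?_
    rcases m.eq_zero_or_pos with rfl | hm
    · simp
    have hdiv' : Tendsto (fun n : ℕ => (m : ℝ) / n) atTop (𝓝[>] 0) :=
      tendsto_nhdsWithin_iff.2 ⟨hdiv, eventually_atTop.2 ⟨1, fun n hn => by
        simp only [mem_Ioi]; positivity⟩⟩
    simpa using (hS.comp hdiv').const_mul (Real.sqrt m)
  obtain ⟨k, hk, hdiag⟩ := exists_tendsto_atTop_tendsto_diag hv
  exact ⟨k, ⟨tendsto_natCast_atTop_atTop.comp hk, hdiag.fst_nhds⟩, hdiag.snd_nhds⟩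

theorem exists_intermediate_sequence_general
    (F : ℝ → ℝ) (γ : ℝ) (hγ : -(1/2 : ℝ) < γ) (atil : ℝ → ℝ)
    (hqc : TendstoLocallyUniformlyOn
      (fun t x => (qf F (1 - t * x) - qf F (1 - t)) / atil t)
      (fun x => zfun γ x) (nhdsWithin 0 (Set.Ioi 0)) (Set.Ioi 0)) :
    ∃ k : ℕ → ℕ, Intermediate k ∧ ∃ εt : ℝ, 0 < εt ∧
      Tendsto (fun n => Real.sqrt (k n) *
          ⨆ x : Set.Ioc (0:ℝ) (1+εt), (x:ℝ)^(γ+1/2) * |Rrem F atil γ ((k n:ℝ)/n) x|)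
        atTop (nhds 0) := by
  obtain ⟨k, hk, hlim⟩ := exists_intermediate_sqrt_mul_tendsto_zero
    (tendsto_iSup_rpow_mul_abs_quantileIncrement_sub hγ hqc)
  exact ⟨k, hk, 1, one_pos, by rwa [one_add_one_eq_two]⟩

/-- under the quantile convergence condition there always exists an
intermediate sequence satisfying the bias condition of Theorem 2.1; i.e. the latter
only restricts the growth of `k_n` and is not an additional condition on `F`. -/
theorem exists_intermediate_sequence
    (F : ℝ → ℝ) (hF : IsCDF F) (γ : ℝ) (hγ : -(1/2 : ℝ) < γ) (atil : ℝ → ℝ)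
    (hqc : TendstoLocallyUniformlyOn
      (fun t x => (qf F (1 - t * x) - qf F (1 - t)) / atil t)
      (fun x => zfun γ x) (nhdsWithin 0 (Set.Ioi 0)) (Set.Ioi 0)) :
    ∃ k : ℕ → ℕ, Intermediate k ∧ ∃ εt : ℝ, 0 < εt ∧
      Tendsto (fun n => Real.sqrt (k n) *
          ⨆ x : Set.Ioc (0:ℝ) (1+εt), (x:ℝ)^(γ+1/2) * |Rrem F atil γ ((k n:ℝ)/n) x|)
        atTop (nhds 0) :=
  exists_intermediate_sequence_general F γ hγ atil hqc

end ExtremeRisk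
end
end

section
/- (Ledford–Tawn model consequences) Let Y = (Y₁,Y₂) have standard Pareto marginals and suppose that for some function d, not identically trivial, one has P(Y₁ > u y₁, Y₂ > u y₂)/P(Y₁ > u, Y₂ > u) → d(y₁,y₂) as u → ∞, uniformly over all (y₁,y₂) with max(y₁,y₂) = 1. Then there exists η ∈ (0,1], called the coefficient of tail dependence, such that: (i) the function u ↦ P(min(Y₁,Y₂) > u) is regularly varying at ∞ with index −1/η, i.e. P(min(Y₁,Y₂) > ux)/P(min(Y₁,Y₂) > u) → x^{−1/η} for all x > 0; and (ii) the limit function d is homogeneous of order −1/η, i.e. d(λy₁, λy₂) = λ^{−1/η} d(y₁,y₂) for all λ > 0 and y₁, y₂ > 0. Moreover, if η < 1 then Y₁ and Y₂ are asymptotically independent (P(Y₂ > u | Y₁ > u) → 0), and if Y₁ and Y₂ are exactly independent then η = 1/2. -/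
open MeasureTheory ProbabilityTheory Filter Topology
open scoped ENNReal NNReal Classical

noncomputable section

namespace ExtremeRisk

/-! Write `Q u = P(Y₁ > u, Y₂ > u)`. On the diagonal the Ledford–Tawn limit says
`Q (u x) / Q u → g x := d x x`; factoring `Q (u x y) / Q u` through `Q (u x)` shows that `g` is
multiplicative, and it is antitone because `Q` is, so `log ∘ g ∘ exp` is a monotone solution of
Cauchy's equation and `g x = x ^ c`. The same factorisation gives the homogeneity of `d`.
Since `u Q u ≤ u P(Y₁ > u) = 1`, while `u Q u` would grow geometrically along `u 2ᵏ` if `c > -1`,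
we get `c ≤ -1`, i.e. `η := -1/c ∈ (0, 1]`; for `c < -1` the same comparison makes
`u Q u = P(Y₂ > u | Y₁ > u)` decay geometrically. Under independence `Q u = u⁻²`, so `c = -2`. -/

open Real

theorem eq_mul_of_map_add_of_antitone {h : ℝ → ℝ} (hadd : ∀ s t, h (s + t) = h s + h t)
    (hanti : Antitone h) (t : ℝ) : h t = t * h 1 := by
  let f : ℝ →+ ℝ := AddMonoidHom.mk' h hadd
  have hrat : ∀ q : ℚ, h q = q * h 1 := fun q => by
    simpa [f, smul_eq_mul] using map_ratCast_smul f ℝ ℝ q 1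
  -- otherwise a rational slightly to the right of `s` would break antitonicity
  have hge : ∀ s, s * h 1 ≤ h s := by
    intro s
    by_contra! hlt
    obtain ⟨δ, hδ, hball⟩ := Metric.eventually_nhds_iff.1
      ((continuous_mul_const (h 1)).continuousAt.eventually (lt_mem_nhds hlt))
    obtain ⟨q, hsq, hqδ⟩ := exists_rat_btwn (lt_add_of_pos_right s hδ)
    have hq : h s < q * h 1 := hball (by rw [Real.dist_eq, abs_lt]; constructor <;> linarith)
    have := hanti hsq.le
    rw [hrat q] at this
    linarith
  have hneg : h (-t) = -h t := map_neg f t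
  linarith [hge t, hge (-t)]

theorem exists_eq_rpow_of_map_mul_of_antitoneOn {g : ℝ → ℝ} (hpos : ∀ x, 0 < x → 0 < g x)
    (hmul : ∀ x y, 0 < x → 0 < y → g (x * y) = g x * g y)
    (hanti : AntitoneOn g (Set.Ioi 0)) : ∃ c : ℝ, ∀ x, 0 < x → g x = x ^ c := by
  set h : ℝ → ℝ := fun t => log (g (exp t)) with hh
  have hadd : ∀ s t, h (s + t) = h s + h t := fun s t => by
    simp only [hh, exp_add, hmul _ _ (exp_pos s) (exp_pos t),
      log_mul (hpos _ (exp_pos s)).ne' (hpos _ (exp_pos t)).ne']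
  have hanti' : Antitone h := fun s t hst =>
    log_le_log (hpos _ (exp_pos t)) (hanti (exp_pos s) (exp_pos t) (exp_le_exp.2 hst))
  refine ⟨h 1, fun x hx => ?_⟩
  rw [rpow_def_of_pos hx, ← eq_mul_of_map_add_of_antitone hadd hanti']
  simp only [hh, exp_log hx, exp_log (hpos x hx)]

theorem frequently_lt_of_eventually_mul_le {φ : ℝ → ℝ} {x ρ : ℝ} (hx : 1 ≤ x) (hρ : 1 < ρ)
    (hpos : ∀ᶠ u in atTop, 0 < φ u) (hstep : ∀ᶠ u in atTop, ρ * φ u ≤ φ (u * x)) (B : ℝ) :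
    ∃ᶠ u in atTop, B < φ u := by
  obtain ⟨V, hV⟩ := eventually_atTop.1 ((hpos.and hstep).and (eventually_ge_atTop 0))
  have hchain : ∀ W, V ≤ W → ∀ k : ℕ, ρ ^ k * φ W ≤ φ (W * x ^ k) := by
    intro W hW k
    induction k with
    | zero => simp
    | succ k ih =>
      have hWk : V ≤ W * x ^ k :=
        hW.trans (le_mul_of_one_le_right ((hV V le_rfl).2.trans hW) (one_le_pow₀ hx))
      calc ρ ^ (k + 1) * φ W = ρ * (ρ ^ k * φ W) := by ring
        _ ≤ ρ * φ (W * x ^ k) := by gcongr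
        _ ≤ φ (W * x ^ k * x) := (hV _ hWk).1.2
        _ = φ (W * x ^ (k + 1)) := by rw [pow_succ, mul_assoc]
  refine frequently_atTop.2 fun a => ?_
  set W := max V a
  have hW : 0 < φ W := (hV W (le_max_left V a)).1.1
  obtain ⟨k, hk⟩ := ((tendsto_pow_atTop_atTop_of_one_lt hρ).eventually_gt_atTop (B / φ W)).exists
  refine ⟨W * x ^ k, ?_, ?_⟩
  · exact (le_max_right V a).trans
      (le_mul_of_one_le_right ((hV V le_rfl).2.trans (le_max_left V a)) (one_le_pow₀ hx))
  · exact ((div_lt_iff₀ hW).1 hk).trans_le (hchain W (le_max_left V a) k)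

theorem tendsto_zero_of_eventually_le_mul {φ : ℝ → ℝ} {x ρ B : ℝ} (hx : 1 < x) (hρ₀ : 0 ≤ ρ)
    (hρ : ρ < 1) (hnonneg : ∀ᶠ u in atTop, 0 ≤ φ u) (hbdd : ∀ᶠ u in atTop, φ u ≤ B)
    (hstep : ∀ᶠ u in atTop, φ (u * x) ≤ ρ * φ u) : Tendsto φ atTop (𝓝 0) := by
  obtain ⟨V, hV⟩ := eventually_atTop.1 (((hnonneg.and hbdd).and hstep).and (eventually_ge_atTop 0))
  have hx₀ : 0 < x := by linarith
  have hdecay : ∀ k : ℕ, ∀ u, V * x ^ k ≤ u → φ u ≤ B * ρ ^ k := by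
    intro k
    induction k with
    | zero => intro u hu; simpa using (hV u (by simpa using hu)).1.1.2
    | succ k ih =>
      intro u hu
      have hw : V * x ^ k ≤ u / x := by rwa [le_div_iff₀ hx₀, mul_assoc, ← pow_succ]
      have hVw : V ≤ u / x :=
        (le_mul_of_one_le_right (hV V le_rfl).2 (one_le_pow₀ hx.le)).trans hw
      calc φ u = φ (u / x * x) := by rw [div_mul_cancel₀ _ hx₀.ne']
        _ ≤ ρ * φ (u / x) := (hV _ hVw).1.2
        _ ≤ ρ * (B * ρ ^ k) := by gcongr; exact ih _ hw
        _ = B * ρ ^ (k + 1) := by ring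
  refine tendsto_order.2 ⟨fun a ha => hnonneg.mono fun u hu => ha.trans_le hu, fun a ha => ?_⟩
  have hlim : Tendsto (fun k : ℕ => B * ρ ^ k) atTop (𝓝 0) := by
    simpa using (tendsto_pow_atTop_nhds_zero_of_lt_one hρ₀ hρ).const_mul B
  obtain ⟨k, hk⟩ := (hlim.eventually (gt_mem_nhds ha)).exists
  filter_upwards [eventually_ge_atTop (V * x ^ k)] with u hu
  exact (hdecay k u hu).trans_lt hk

section RatioLimit

variable {Q : ℝ → ℝ}

theorem Antitone.pos_of_tendsto_ratio (hQ : Antitone Q) (hnonneg : ∀ u, 0 ≤ Q u) {x L : ℝ}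
    (hL : L ≠ 0) (h : Tendsto (fun u => Q (u * x) / Q u) atTop (𝓝 L)) (u : ℝ) : 0 < Q u := by
  refine (hnonneg u).lt_of_ne' fun hu => hL (tendsto_nhds_unique h (tendsto_const_nhds.congr' ?_))
  filter_upwards [eventually_ge_atTop u] with v hv
  rw [le_antisymm (hu ▸ hQ hv) (hnonneg v), div_zero]

theorem tendsto_comp_mul_div {R : ℝ → ℝ} (hQ : ∀ u, Q u ≠ 0) {a b lam : ℝ} (hlam : 0 < lam)
    (hR : Tendsto (fun u => R u / Q u) atTop (𝓝 a))
    (hQlam : Tendsto (fun u => Q (u * lam) / Q u) atTop (𝓝 b)) :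
    Tendsto (fun u => R (u * lam) / Q u) atTop (𝓝 (a * b)) :=
  ((hR.comp (tendsto_id.atTop_mul_const hlam)).mul hQlam).congr fun _ =>
    div_mul_div_cancel₀ (hQ _)

variable {g : ℝ → ℝ} (hQ : ∀ u, 0 < Q u)
  (hg : ∀ x, 0 < x → Tendsto (fun u => Q (u * x) / Q u) atTop (𝓝 (g x)))
include hQ hg

theorem map_mul_of_tendsto_ratio {x y : ℝ} (hx : 0 < x) (hy : 0 < y) : g (x * y) = g x * g y := by
  have h := tendsto_comp_mul_div (fun u => (hQ u).ne') hx (hg y hy) (hg x hx)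
  simp only [mul_assoc] at h
  rw [tendsto_nhds_unique (hg _ (mul_pos hx hy)) h, mul_comm]

theorem antitoneOn_of_tendsto_ratio (hanti : Antitone Q) : AntitoneOn g (Set.Ioi 0) :=
  fun x hx y hy hxy => le_of_tendsto_of_tendsto (hg y hy) (hg x hx) <| by
    filter_upwards [eventually_ge_atTop 0] with u hu
    exact div_le_div_of_nonneg_right (hanti (mul_le_mul_of_nonneg_left hxy hu)) (hQ u).le

end RatioLimit

section TailExponent

variable {Q : ℝ → ℝ} {x c : ℝ} (hx : 1 < x) (hQ : ∀ u, 0 < Q u)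
  (hlim : Tendsto (fun u => Q (u * x) / Q u) atTop (𝓝 (x ^ c)))
include hx hQ hlim

theorem tendsto_id_mul_ratio :
    Tendsto (fun u => u * x * Q (u * x) / (u * Q u)) atTop (𝓝 (x ^ (c + 1))) := by
  rw [rpow_add_one (by positivity), mul_comm]
  refine (hlim.const_mul x).congr' ?_
  filter_upwards [eventually_gt_atTop 0] with u hu
  field_simp [(hQ u).ne']

theorem le_neg_one_of_tendsto_ratio (hub : ∀ᶠ u in atTop, u * Q u ≤ 1) : c ≤ -1 := by
  by_contra! hc
  obtain ⟨ρ, hρ, hρlim⟩ := exists_between (one_lt_rpow hx (by linarith : 0 < c + 1))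
  have hpos : ∀ᶠ u in atTop, 0 < u * Q u :=
    (eventually_gt_atTop 0).mono fun u hu => mul_pos hu (hQ u)
  have hstep : ∀ᶠ u in atTop, ρ * (u * Q u) ≤ u * x * Q (u * x) := by
    filter_upwards [(tendsto_id_mul_ratio hx hQ hlim).eventually (lt_mem_nhds hρlim), hpos]
      with u hu hu₀
    exact ((lt_div_iff₀ hu₀).1 hu).le
  obtain ⟨u, hgt, hle⟩ :=
    ((frequently_lt_of_eventually_mul_le hx.le hρ hpos hstep 1).and_eventually hub).exists
  exact hgt.not_ge hle

theorem tendsto_id_mul_nhds_zero (hc : c < -1) (hub : ∀ᶠ u in atTop, u * Q u ≤ 1) :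
    Tendsto (fun u => u * Q u) atTop (𝓝 0) := by
  obtain ⟨ρ, hρlim, hρ⟩ :=
    exists_between (rpow_lt_one_of_one_lt_of_neg hx (by linarith : c + 1 < 0))
  have hstep : ∀ᶠ u in atTop, u * x * Q (u * x) ≤ ρ * (u * Q u) := by
    filter_upwards [(tendsto_id_mul_ratio hx hQ hlim).eventually (gt_mem_nhds hρlim),
      eventually_gt_atTop 0] with u hu hu₀
    exact ((div_lt_iff₀ (mul_pos hu₀ (hQ u))).1 hu).le
  refine tendsto_zero_of_eventually_le_mul hx ((rpow_pos_of_pos (by linarith) _).le.trans hρlim.le)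
    hρ ?_ hub ?_
  · exact (eventually_ge_atTop 0).mono fun u hu => mul_nonneg hu (hQ u).le
  · simpa only [mul_assoc] using hstep

end TailExponent

theorem eq_of_tendsto_ratio_of_eventually_eq_rpow {Q : ℝ → ℝ} {x a c : ℝ} (hx : 1 < x)
    (hlim : Tendsto (fun u => Q (u * x) / Q u) atTop (𝓝 (x ^ c)))
    (hQ : ∀ᶠ u in atTop, Q u = u ^ a) : c = a := by
  have hx₀ : 0 < x := by linarith
  have hlim' : Tendsto (fun u => Q (u * x) / Q u) atTop (𝓝 (x ^ a)) := by
    refine tendsto_const_nhds.congr' ?_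
    filter_upwards [hQ, (tendsto_id.atTop_mul_const hx₀).eventually hQ, eventually_gt_atTop 0]
      with u hu hux hu₀
    dsimp only [id] at hux
    rw [hu, hux, mul_rpow hu₀.le hx₀.le, mul_div_cancel_left₀ _ (rpow_pos_of_pos hu₀ a).ne']
  exact (rpow_right_inj hx₀ hx.ne').1 (tendsto_nhds_unique hlim hlim')

section ParetoTail

variable {Ω : Type*} [MeasurableSpace Ω] {P : Measure Ω} [IsProbabilityMeasure P] {X : Ω → ℝ}

theorem toReal_prob_lt_of_toReal_prob_le (hX : Measurable X) {y p : ℝ}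
    (h : (P {ω | X ω ≤ y}).toReal = 1 - p) : (P {ω | y < X ω}).toReal = p := by
  have hcompl : {ω | y < X ω} = {ω | X ω ≤ y}ᶜ := by ext; simp
  rw [hcompl, ← measureReal_def, probReal_compl_eq_one_sub (measurableSet_le hX measurable_const),
    measureReal_def, h, sub_sub_cancel]

theorem mul_toReal_prob_lt_and_lt_le_one (hX : Measurable X)
    (hpareto : ∀ y : ℝ, 1 ≤ y → (P {ω | X ω ≤ y}).toReal = 1 - y⁻¹) (X' : Ω → ℝ) {u : ℝ}
    (hu : 1 ≤ u) : u * (P {ω | u < X ω ∧ u < X' ω}).toReal ≤ 1 :=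
  calc u * (P {ω | u < X ω ∧ u < X' ω}).toReal ≤ u * (P {ω | u < X ω}).toReal := by
        gcongr
        · finiteness
        · exact And.left
    _ = 1 := by
        rw [toReal_prob_lt_of_toReal_prob_le hX (hpareto u hu), mul_inv_cancel₀ (by positivity)]

end ParetoTail

theorem ledford_tawn_consequences_general
    {Ω : Type} [MeasurableSpace Ω] (P : Measure Ω) [IsProbabilityMeasure P]
    (Y : Ω → ℝ × ℝ) (hYm : Measurable Y)
    (hp₁ : ∀ y : ℝ, 1 ≤ y → (P {ω | (Y ω).1 ≤ y}).toReal = 1 - y⁻¹)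
    (hp₂ : ∀ y : ℝ, 1 ≤ y → (P {ω | (Y ω).2 ≤ y}).toReal = 1 - y⁻¹)
    (d : ℝ → ℝ → ℝ)
    (hconv : ∀ y₁ y₂ : ℝ, 0 < y₁ → 0 < y₂ →
      Tendsto (fun u => (P {ω | u * y₁ < (Y ω).1 ∧ u * y₂ < (Y ω).2}).toReal /
          (P {ω | u < (Y ω).1 ∧ u < (Y ω).2}).toReal) atTop (nhds (d y₁ y₂)))
    (hpos : ∀ y₁ y₂ : ℝ, 0 < y₁ → 0 < y₂ → 0 < d y₁ y₂) :
    ∃ η : ℝ, 0 < η ∧ η ≤ 1 ∧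
      (∀ x : ℝ, 0 < x →
        Tendsto (fun u => (P {ω | u * x < (Y ω).1 ∧ u * x < (Y ω).2}).toReal /
            (P {ω | u < (Y ω).1 ∧ u < (Y ω).2}).toReal) atTop (nhds (x ^ (-(1/η))))) ∧
      (∀ lam y₁ y₂ : ℝ, 0 < lam → 0 < y₁ → 0 < y₂ →
        d (lam * y₁) (lam * y₂) = lam ^ (-(1/η)) * d y₁ y₂) ∧
      (η < 1 → Tendsto (fun u => (P {ω | u < (Y ω).1 ∧ u < (Y ω).2}).toReal /
          (P {ω | u < (Y ω).1}).toReal) atTop (nhds 0)) ∧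
      ((∀ y₁ y₂ : ℝ, (P {ω | y₁ < (Y ω).1 ∧ y₂ < (Y ω).2}).toReal =
          (P {ω | y₁ < (Y ω).1}).toReal * (P {ω | y₂ < (Y ω).2}).toReal) → η = 1/2) := by
  set Q : ℝ → ℝ := fun u => (P {ω | u < (Y ω).1 ∧ u < (Y ω).2}).toReal
  have htail₁ : ∀ u, 1 ≤ u → (P {ω | u < (Y ω).1}).toReal = u⁻¹ := fun u hu =>
    toReal_prob_lt_of_toReal_prob_le hYm.fst (hp₁ u hu)
  have htail₂ : ∀ u, 1 ≤ u → (P {ω | u < (Y ω).2}).toReal = u⁻¹ := fun u hu =>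
    toReal_prob_lt_of_toReal_prob_le hYm.snd (hp₂ u hu)
  have hQanti : Antitone Q := fun u v huv => ENNReal.toReal_mono (measure_ne_top P _)
    (measure_mono fun ω hω => ⟨huv.trans_lt hω.1, huv.trans_lt hω.2⟩)
  have hg : ∀ x, 0 < x → Tendsto (fun u => Q (u * x) / Q u) atTop (𝓝 (d x x)) :=
    fun x hx => hconv x x hx hx
  have hQpos : ∀ u, 0 < Q u := Antitone.pos_of_tendsto_ratio hQanti (fun _ => ENNReal.toReal_nonneg)
    (hpos 1 1 one_pos one_pos).ne' (hg 1 one_pos)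
  obtain ⟨c, hc⟩ := exists_eq_rpow_of_map_mul_of_antitoneOn (fun x hx => hpos x x hx hx)
    (fun x y hx hy => map_mul_of_tendsto_ratio hQpos hg hx hy)
    (antitoneOn_of_tendsto_ratio hQpos hg hQanti)
  have hg₂ : Tendsto (fun u => Q (u * 2) / Q u) atTop (𝓝 (2 ^ c)) := hc 2 two_pos ▸ hg 2 two_pos
  have hub : ∀ᶠ u in atTop, u * Q u ≤ 1 := eventually_atTop.2
    ⟨1, fun u hu => mul_toReal_prob_lt_and_lt_le_one hYm.fst hp₁ _ hu⟩
  have hc₁ : c ≤ -1 := le_neg_one_of_tendsto_ratio one_lt_two hQpos hg₂ hub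
  have hexp : -(1 / (-c)⁻¹) = c := by rw [one_div, inv_inv, neg_neg]
  refine ⟨(-c)⁻¹, inv_pos.2 (by linarith), inv_le_one_of_one_le₀ (by linarith), ?_, ?_, ?_, ?_⟩
  · intro x hx
    rw [hexp, ← hc x hx]
    exact hg x hx
  · intro lam y₁ y₂ hlam hy₁ hy₂
    rw [hexp, ← hc lam hlam, mul_comm (d lam lam)]
    have h := tendsto_comp_mul_div (fun u => (hQpos u).ne') hlam (hconv y₁ y₂ hy₁ hy₂) (hg lam hlam)
    simp only [mul_assoc] at h
    exact tendsto_nhds_unique (hconv _ _ (mul_pos hlam hy₁) (mul_pos hlam hy₂)) h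
  · intro hη
    have hc₁' : c < -1 := by linarith [(inv_lt_one₀ (by linarith : (0:ℝ) < -c)).1 hη]
    refine (tendsto_id_mul_nhds_zero one_lt_two hQpos hg₂ hc₁' hub).congr' ?_
    filter_upwards [eventually_ge_atTop 1] with u hu
    rw [htail₁ u hu, div_inv_eq_mul, mul_comm]
  · intro hind
    have hQsq : ∀ᶠ u in atTop, Q u = u ^ (-2 : ℝ) := by
      filter_upwards [eventually_ge_atTop 1] with u hu
      rw [show Q u = _ from hind u u, htail₁ u hu, htail₂ u hu, rpow_neg (by linarith), rpow_two,
        sq, mul_inv]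
    rw [eq_of_tendsto_ratio_of_eventually_eq_rpow one_lt_two hg₂ hQsq]
    norm_num

/-- consequences of the Ledford–Tawn model: existence of the
coefficient of tail dependence `η ∈ (0,1]`, regular variation of
`u ↦ P(min(Y₁,Y₂) > u)` with index `−1/η`, homogeneity of `d` of order `−1/η`,
asymptotic independence when `η < 1`, and `η = 1/2` under exact independence. -/
theorem ledford_tawn_consequences
    {Ω : Type} [MeasurableSpace Ω] (P : Measure Ω) [IsProbabilityMeasure P]
    (Y : Ω → ℝ × ℝ) (hYm : Measurable Y)
    (hp₁ : ∀ y : ℝ, 1 ≤ y → (P {ω | (Y ω).1 ≤ y}).toReal = 1 - y⁻¹)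
    (hp₂ : ∀ y : ℝ, 1 ≤ y → (P {ω | (Y ω).2 ≤ y}).toReal = 1 - y⁻¹)
    (d : ℝ → ℝ → ℝ)
    (hconv : ∀ y₁ y₂ : ℝ, 0 < y₁ → 0 < y₂ →
      Tendsto (fun u => (P {ω | u * y₁ < (Y ω).1 ∧ u * y₂ < (Y ω).2}).toReal /
          (P {ω | u < (Y ω).1 ∧ u < (Y ω).2}).toReal) atTop (nhds (d y₁ y₂)))
    (hunif : TendstoUniformlyOn
      (fun u y => (P {ω | u * y.1 < (Y ω).1 ∧ u * y.2 < (Y ω).2}).toReal /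
          (P {ω | u < (Y ω).1 ∧ u < (Y ω).2}).toReal)
      (fun y => d y.1 y.2) atTop
      {y : ℝ × ℝ | 0 < y.1 ∧ 0 < y.2 ∧ max y.1 y.2 = 1})
    (hpos : ∀ y₁ y₂ : ℝ, 0 < y₁ → 0 < y₂ → 0 < d y₁ y₂)
    (hnt : ∃ x : ℝ, 0 < x ∧ d x x ≠ 1) :
    ∃ η : ℝ, 0 < η ∧ η ≤ 1 ∧
      (∀ x : ℝ, 0 < x →
        Tendsto (fun u => (P {ω | u * x < (Y ω).1 ∧ u * x < (Y ω).2}).toReal /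
            (P {ω | u < (Y ω).1 ∧ u < (Y ω).2}).toReal) atTop (nhds (x ^ (-(1/η))))) ∧
      (∀ lam y₁ y₂ : ℝ, 0 < lam → 0 < y₁ → 0 < y₂ →
        d (lam * y₁) (lam * y₂) = lam ^ (-(1/η)) * d y₁ y₂) ∧
      (η < 1 → Tendsto (fun u => (P {ω | u < (Y ω).1 ∧ u < (Y ω).2}).toReal /
          (P {ω | u < (Y ω).1}).toReal) atTop (nhds 0)) ∧
      ((∀ y₁ y₂ : ℝ, (P {ω | y₁ < (Y ω).1 ∧ y₂ < (Y ω).2}).toReal =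
          (P {ω | y₁ < (Y ω).1}).toReal * (P {ω | y₂ < (Y ω).2}).toReal) → η = 1/2) :=
  ledford_tawn_consequences_general P Y hYm hp₁ hp₂ d hconv hpos

end ExtremeRisk
end
end
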